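/- arXiv:2310.15449 — 5 statements merged into one kernel-verified Lean document; each statement's English description precedes it below -/
import Mathlib

section
/- Let G and H be disjoint graphs, let u be a vertex of G and v a vertex of H, and let GuvH be the graph obtained from the disjoint union G ∪ H by adding the edge uv. Let λ be a real number. If m_λ(G) = m_λ(G − u) + 1, then m_λ(GuvH) = m_λ(H − v) + m_λ(G) − 1. -/
open Module

attribute [local instance] Classical.propDecidable

noncomputable def adjMat {V : Type*} [Fintype V] (G : SimpleGraph V) : Matrix V V ℝ :=
  Matrix.of fun u v => if G.Adj u v then 1 else 0

noncomputable def eigMult {V : Type*} [Fintype V] (G : SimpleGraph V) (μ : ℝ) : ℕ :=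
  Module.finrank ℝ (Module.End.eigenspace (adjMat G).mulVecLin μ)

def HasEig {V : Type*} [Fintype V] (G : SimpleGraph V) (μ : ℝ) : Prop :=
  Module.End.HasEigenvalue (adjMat G).mulVecLin μ

def IsMatchingSet {V : Type*} (G : SimpleGraph V) (M : Finset (Sym2 V)) : Prop :=
  (∀ e ∈ M, e ∈ G.edgeSet) ∧
  ∀ e ∈ M, ∀ f ∈ M, e ≠ f → ∀ v, v ∈ e → v ∉ f

def IsInducedMatchingSet {V : Type*} (G : SimpleGraph V) (M : Finset (Sym2 V)) : Prop :=
  IsMatchingSet G M ∧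
  ∀ e ∈ M, ∀ f ∈ M, e ≠ f → ∀ u v, u ∈ e → v ∈ f → ¬ G.Adj u v

noncomputable def matchNum {V : Type*} [Fintype V] (G : SimpleGraph V) : ℕ :=
  sSup {k | ∃ M, IsMatchingSet G M ∧ M.card = k}

noncomputable def indMatchNum {V : Type*} [Fintype V] (G : SimpleGraph V) : ℕ :=
  sSup {k | ∃ M, IsInducedMatchingSet G M ∧ M.card = k}

noncomputable def cyclomatic {V : Type*} [Fintype V] (G : SimpleGraph V) : ℕ :=
  G.edgeSet.ncard + 1 - Fintype.card V

def delV {V : Type*} (G : SimpleGraph V) (v : V) : SimpleGraph {u : V // u ≠ v} :=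
  G.induce {u : V | u ≠ v}

def starGraph (n : ℕ) : SimpleGraph (Fin (n + 1)) :=
  SimpleGraph.fromRel (fun u _ => u = 0)

def triStar (a : ℕ) : SimpleGraph (Fin 3 ⊕ Fin 3 × Fin a) :=
  SimpleGraph.fromRel (fun x y =>
    (∃ i j, x = Sum.inl i ∧ y = Sum.inl j) ∨
    (∃ i k, x = Sum.inl i ∧ y = Sum.inr (i, k)))

def GuvH {V W : Type*} (G : SimpleGraph V) (H : SimpleGraph W) (u : V) (v : W) :
    SimpleGraph (V ⊕ W) :=
  SimpleGraph.fromRel (fun x y =>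
    (∃ a b, x = Sum.inl a ∧ y = Sum.inl b ∧ G.Adj a b) ∨
    (∃ a b, x = Sum.inr a ∧ y = Sum.inr b ∧ H.Adj a b) ∨
    (x = Sum.inl u ∧ y = Sum.inr v))


-- ===== auxiliary lemmas =====

lemma sum_split' {α : Type*} [Fintype α] (a : α) (f : α → ℝ) :
    ∑ x : α, f x = (∑ x : {y : α // y ≠ a}, f x.val) + f a := by
  classical
  rw [Fintype.sum_eq_sum_compl_add a f]
  congr 1
  exact Finset.sum_subtype _ (by simp) f

lemma sum_ite_eq_my {α : Type*} [Fintype α] (a : α) (g : α → ℝ) :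
    ∑ x : α, (if x = a then g x else 0) = g a := by
  classical
  rw [Finset.sum_eq_single a]
  · simp
  · intro b _ hb; exact if_neg hb
  · simp

lemma adjMat_symm' {V : Type*} [Fintype V] (G : SimpleGraph V) (a b : V) :
    adjMat G a b = adjMat G b a := by
  simp only [adjMat, Matrix.of_apply, SimpleGraph.adj_comm]

lemma mem_eig_iff {V : Type*} [Fintype V] (G : SimpleGraph V) (μ : ℝ) (φ : V → ℝ) :
    φ ∈ Module.End.eigenspace (adjMat G).mulVecLin μ ↔
      ∀ a, ∑ b, adjMat G a b * φ b = μ * φ a := by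
  rw [Module.End.mem_eigenspace_iff, funext_iff]
  simp [Matrix.mulVecLin_apply, Matrix.mulVec, dotProduct]

section adjlemmas
variable {V W : Type*} (G : SimpleGraph V) (H : SimpleGraph W) (u a b : V) (v c d : W)

lemma adj_ll : (GuvH G H u v).Adj (Sum.inl a) (Sum.inl b) ↔ G.Adj a b := by
  simp only [GuvH, SimpleGraph.fromRel_adj]
  constructor
  · rintro ⟨hne, h | h⟩ <;>
    · rcases h with ⟨a', b', h1, h2, h3⟩ | ⟨a', b', h1, h2, h3⟩ | ⟨h1, h2⟩ <;>
        simp_all <;> exact h3.symm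
  · intro h
    exact ⟨by simp [h.ne], Or.inl (Or.inl ⟨a, b, rfl, rfl, h⟩)⟩

lemma adj_rr : (GuvH G H u v).Adj (Sum.inr c) (Sum.inr d) ↔ H.Adj c d := by
  simp only [GuvH, SimpleGraph.fromRel_adj]
  constructor
  · rintro ⟨hne, h | h⟩ <;>
    · rcases h with ⟨a', b', h1, h2, h3⟩ | ⟨a', b', h1, h2, h3⟩ | ⟨h1, h2⟩ <;>
        simp_all <;> exact h3.symm
  · intro h
    exact ⟨by simp [h.ne], Or.inl (Or.inr (Or.inl ⟨c, d, rfl, rfl, h⟩))⟩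

lemma adj_lr : (GuvH G H u v).Adj (Sum.inl a) (Sum.inr c) ↔ (a = u ∧ c = v) := by
  simp only [GuvH, SimpleGraph.fromRel_adj]
  constructor
  · rintro ⟨hne, h | h⟩ <;>
    · rcases h with ⟨a', b', h1, h2, h3⟩ | ⟨a', b', h1, h2, h3⟩ | ⟨h1, h2⟩ <;> simp_all
  · rintro ⟨rfl, rfl⟩
    exact ⟨by simp, Or.inl (Or.inr (Or.inr ⟨rfl, rfl⟩))⟩

lemma adj_rl : (GuvH G H u v).Adj (Sum.inr c) (Sum.inl a) ↔ (a = u ∧ c = v) := by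
  rw [SimpleGraph.adj_comm]; exact adj_lr G H u a v c

lemma adj_delV (x y : {w : V // w ≠ u}) : (delV G u).Adj x y ↔ G.Adj x.val y.val := by
  simp [delV]
end adjlemmas

section adjMatlemmas
variable {V W : Type*} [Fintype V] [Fintype W]
  (G : SimpleGraph V) (H : SimpleGraph W) (u a b : V) (v c d : W)

lemma adjMat_ll : adjMat (GuvH G H u v) (Sum.inl a) (Sum.inl b) = adjMat G a b :=
  if_congr (adj_ll G H u a b v) rfl rfl

lemma adjMat_rr : adjMat (GuvH G H u v) (Sum.inr c) (Sum.inr d) = adjMat H c d :=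
  if_congr (adj_rr G H u v c d) rfl rfl

lemma adjMat_lr :
    adjMat (GuvH G H u v) (Sum.inl a) (Sum.inr c) = if a = u ∧ c = v then 1 else 0 :=
  if_congr (adj_lr G H u a v c) rfl rfl

lemma adjMat_rl :
    adjMat (GuvH G H u v) (Sum.inr c) (Sum.inl a) = if a = u ∧ c = v then 1 else 0 :=
  if_congr (adj_rl G H u a v c) rfl rfl

lemma adjMat_delV (x y : {w : V // w ≠ u}) :
    adjMat (delV G u) x y = adjMat G x.val y.val :=
  if_congr (adj_delV G u x y) rfl rfl

lemma adjMat_diag : adjMat G a a = 0 := by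
  simp [adjMat]

-- expansion of the eigen-equation for GuvH
lemma mem_eig_guvh_iff (μ : ℝ) (ξ : (V ⊕ W) → ℝ) :
    ξ ∈ Module.End.eigenspace (adjMat (GuvH G H u v)).mulVecLin μ ↔
      ((∀ a, (∑ b, adjMat G a b * ξ (Sum.inl b)) +
          (if a = u then ξ (Sum.inr v) else 0) = μ * ξ (Sum.inl a)) ∧
       (∀ c, (∑ d, adjMat H c d * ξ (Sum.inr d)) +
          (if c = v then ξ (Sum.inl u) else 0) = μ * ξ (Sum.inr c))) := by
  rw [mem_eig_iff]
  have hcross1 : ∀ a : V,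
      (∑ c : W, adjMat (GuvH G H u v) (Sum.inl a) (Sum.inr c) * ξ (Sum.inr c)) =
        (if a = u then ξ (Sum.inr v) else 0) := by
    intro a
    by_cases hau : a = u
    · subst hau
      rw [if_pos rfl]
      rw [← sum_ite_eq_my v (fun c => ξ (Sum.inr c))]
      refine Finset.sum_congr rfl fun c _ => ?_
      rw [adjMat_lr]
      by_cases hc : c = v
      · rw [if_pos ⟨rfl, hc⟩, if_pos hc, one_mul]
      · rw [if_neg (by simp [hc]), if_neg hc, zero_mul]
    · rw [if_neg hau]
      refine Finset.sum_eq_zero fun c _ => ?_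
      rw [adjMat_lr, if_neg (by simp [hau]), zero_mul]
  have hcross2 : ∀ c : W,
      (∑ a : V, adjMat (GuvH G H u v) (Sum.inr c) (Sum.inl a) * ξ (Sum.inl a)) =
        (if c = v then ξ (Sum.inl u) else 0) := by
    intro c
    by_cases hcv : c = v
    · subst hcv
      rw [if_pos rfl]
      rw [← sum_ite_eq_my u (fun a => ξ (Sum.inl a))]
      refine Finset.sum_congr rfl fun a _ => ?_
      rw [adjMat_rl]
      by_cases ha : a = u
      · rw [if_pos ⟨ha, rfl⟩, if_pos ha, one_mul]
      · rw [if_neg (by simp [ha]), if_neg ha, zero_mul]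
    · rw [if_neg hcv]
      refine Finset.sum_eq_zero fun a _ => ?_
      rw [adjMat_rl, if_neg (by simp [hcv]), zero_mul]
  constructor
  · intro hξ
    constructor
    · intro a
      have := hξ (Sum.inl a)
      rw [Fintype.sum_sum_type] at this
      rw [← this]
      congr 1
      · exact Finset.sum_congr rfl fun b _ => by rw [adjMat_ll]
      · exact (hcross1 a).symm
    · intro c
      have := hξ (Sum.inr c)
      rw [Fintype.sum_sum_type] at this
      rw [← this, add_comm]
      congr 1
      · exact (hcross2 c).symm
      · exact Finset.sum_congr rfl fun d _ => by rw [adjMat_rr]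
  · rintro ⟨h1, h2⟩ s
    cases s with
    | inl a =>
      rw [Fintype.sum_sum_type, ← h1 a]
      congr 1
      · exact Finset.sum_congr rfl fun b _ => by rw [adjMat_ll]
      · exact hcross1 a
    | inr c =>
      rw [Fintype.sum_sum_type, ← h2 c, add_comm]
      congr 1
      · exact Finset.sum_congr rfl fun d _ => by rw [adjMat_rr]
      · exact hcross2 c

end adjMatlemmas

lemma exists_eigvec_ne_zero {V : Type*} [Fintype V] (G : SimpleGraph V) (u : V) (μ : ℝ)
    (h : eigMult G μ = eigMult (delV G u) μ + 1) :
    ∃ φ, φ ∈ Module.End.eigenspace (adjMat G).mulVecLin μ ∧ φ u ≠ 0 := by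
  by_contra hc
  push_neg at hc
  have hmem : ∀ φ : Module.End.eigenspace (adjMat G).mulVecLin μ,
      (fun x : {y : V // y ≠ u} => φ.1 x.val) ∈
        Module.End.eigenspace (adjMat (delV G u)).mulVecLin μ := by
    intro φ
    rw [mem_eig_iff]
    intro x
    have hφ := (mem_eig_iff G μ φ.1).mp φ.2 x.val
    have hz : φ.1 u = 0 := hc φ.1 φ.2
    have hsplit := sum_split' u (fun y => adjMat G x.val y * φ.1 y)
    simp only [hφ, hz, mul_zero, add_zero] at hsplit
    have : ∑ y : {y : V // y ≠ u}, adjMat (delV G u) x y * φ.1 y.val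
         = ∑ y : {y : V // y ≠ u}, adjMat G x.val y.val * φ.1 y.val :=
      Finset.sum_congr rfl fun y _ => by rw [adjMat_delV]
    rw [this]
    exact hsplit.symm
  let f : Module.End.eigenspace (adjMat G).mulVecLin μ →ₗ[ℝ]
      Module.End.eigenspace (adjMat (delV G u)).mulVecLin μ :=
    { toFun := fun φ => ⟨fun x => φ.1 x.val, hmem φ⟩
      map_add' := fun φ ψ => rfl
      map_smul' := fun c φ => rfl }
  have hinj : Function.Injective f := by
    intro φ ψ hfe
    apply Subtype.ext; funext a
    by_cases ha : a = u
    · subst ha; rw [hc φ.1 φ.2, hc ψ.1 ψ.2]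
    · exact congrFun (congrArg Subtype.val hfe) ⟨a, ha⟩
  have hle := LinearMap.finrank_le_finrank_of_injective hinj
  unfold eigMult at h
  omega

theorem stmt3 {V W : Type*} [Fintype V] [Fintype W]
    (G : SimpleGraph V) (H : SimpleGraph W) (u : V) (v : W) (μ : ℝ)
    (h : eigMult G μ = eigMult (delV G u) μ + 1) :
    eigMult (GuvH G H u v) μ + 1 = eigMult (delV H v) μ + eigMult G μ := by
  classical
  set EG := Module.End.eigenspace (adjMat G).mulVecLin μ with hEGdef
  set EH := Module.End.eigenspace (adjMat (delV H v)).mulVecLin μ with hEHdef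
  set EM := Module.End.eigenspace (adjMat (GuvH G H u v)).mulVecLin μ with hEMdef
  obtain ⟨φ, hφE, hφu⟩ := exists_eigvec_ne_zero G u μ h
  have hφeq := (mem_eig_iff G μ φ).mp hφE
  -- every eigenvector of GuvH vanishes at (inr v)
  have hzv : ∀ ξ : (V ⊕ W) → ℝ, ξ ∈ EM → ξ (Sum.inr v) = 0 := by
    intro ξ hξ
    obtain ⟨h1, h2⟩ := (mem_eig_guvh_iff G H u v μ ξ).mp hξ
    have hsum : ∑ a, φ a * ((∑ b, adjMat G a b * ξ (Sum.inl b)) +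
          (if a = u then ξ (Sum.inr v) else 0)) = ∑ a, φ a * (μ * ξ (Sum.inl a)) :=
      Finset.sum_congr rfl fun a _ => by rw [h1 a]
    have key : ∑ a, φ a * (∑ b, adjMat G a b * ξ (Sum.inl b))
             = ∑ a, φ a * (μ * ξ (Sum.inl a)) := by
      calc ∑ a, φ a * (∑ b, adjMat G a b * ξ (Sum.inl b))
          = ∑ a, ∑ b, φ a * (adjMat G a b * ξ (Sum.inl b)) :=
            Finset.sum_congr rfl fun a _ => Finset.mul_sum _ _ _
        _ = ∑ b, ∑ a, φ a * (adjMat G a b * ξ (Sum.inl b)) := Finset.sum_comm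
        _ = ∑ b, (∑ a, adjMat G b a * φ a) * ξ (Sum.inl b) := by
            refine Finset.sum_congr rfl fun b _ => ?_
            rw [Finset.sum_mul]
            refine Finset.sum_congr rfl fun a _ => ?_
            rw [adjMat_symm' G a b]; ring
        _ = ∑ b, (μ * φ b) * ξ (Sum.inl b) :=
            Finset.sum_congr rfl fun b _ => by rw [hφeq b]
        _ = ∑ b, φ b * (μ * ξ (Sum.inl b)) :=
            Finset.sum_congr rfl fun b _ => by ring
    have hite : ∑ a, φ a * (if a = u then ξ (Sum.inr v) else 0)
        = φ u * ξ (Sum.inr v) := by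
      rw [← sum_ite_eq_my u (fun a => φ a * ξ (Sum.inr v))]
      refine Finset.sum_congr rfl fun a _ => ?_
      by_cases ha : a = u
      · rw [if_pos ha, if_pos ha]
      · rw [if_neg ha, if_neg ha, mul_zero]
    have expand : ∑ a, φ a * ((∑ b, adjMat G a b * ξ (Sum.inl b)) +
          (if a = u then ξ (Sum.inr v) else 0))
        = (∑ a, φ a * (∑ b, adjMat G a b * ξ (Sum.inl b))) +
          ∑ a, φ a * (if a = u then ξ (Sum.inr v) else 0) := by
      rw [← Finset.sum_add_distrib]
      exact Finset.sum_congr rfl fun a _ => mul_add _ _ _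
    have hz0 : φ u * ξ (Sum.inr v) = 0 := by
      rw [expand, key, hite] at hsum
      linarith
    exact (mul_eq_zero.mp hz0).resolve_left hφu
  -- first component lies in EG
  have hyE : ∀ ξ : (V ⊕ W) → ℝ, ξ ∈ EM → (fun a => ξ (Sum.inl a)) ∈ EG := by
    intro ξ hξ
    obtain ⟨h1, _⟩ := (mem_eig_guvh_iff G H u v μ ξ).mp hξ
    rw [hEGdef, mem_eig_iff]
    intro a
    have := h1 a
    rw [hzv ξ hξ] at this
    simpa using this
  -- second component (restricted) lies in EH
  have hwE : ∀ ξ : (V ⊕ W) → ℝ, ξ ∈ EM →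
      (fun d : {x : W // x ≠ v} => ξ (Sum.inr d.val)) ∈ EH := by
    intro ξ hξ
    obtain ⟨_, h2⟩ := (mem_eig_guvh_iff G H u v μ ξ).mp hξ
    rw [hEHdef, mem_eig_iff]
    intro c
    have hc2 := h2 c.val
    rw [if_neg c.2, add_zero] at hc2
    have hsplit := sum_split' v (fun d => adjMat H c.val d * ξ (Sum.inr d))
    simp only [hzv ξ hξ, mul_zero, add_zero] at hsplit
    calc ∑ d : {x : W // x ≠ v}, adjMat (delV H v) c d * ξ (Sum.inr d.val)
        = ∑ d : {x : W // x ≠ v}, adjMat H c.val d.val * ξ (Sum.inr d.val) :=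
          Finset.sum_congr rfl fun d _ => by rw [adjMat_delV]
      _ = ∑ d : W, adjMat H c.val d * ξ (Sum.inr d) := hsplit.symm
      _ = μ * ξ (Sum.inr c.val) := hc2
  -- the constraint satisfied by eigenvectors of GuvH
  have hconstraint : ∀ ξ : (V ⊕ W) → ℝ, ξ ∈ EM →
      ξ (Sum.inl u) + ∑ d : {x : W // x ≠ v}, adjMat H v d.val * ξ (Sum.inr d.val) = 0 := by
    intro ξ hξ
    obtain ⟨_, h2⟩ := (mem_eig_guvh_iff G H u v μ ξ).mp hξ
    have hc2 := h2 v
    rw [if_pos rfl, hzv ξ hξ, mul_zero] at hc2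
    have hsplit := sum_split' v (fun d => adjMat H v d * ξ (Sum.inr d))
    simp only [hzv ξ hξ, mul_zero, add_zero] at hsplit
    rw [hsplit] at hc2
    linarith
  -- the linear functional L on EG × EH
  let L : (EG × EH) →ₗ[ℝ] ℝ :=
    { toFun := fun p => p.1.1 u + ∑ d : {x : W // x ≠ v}, adjMat H v d.val * p.2.1 d
      map_add' := by
        intro p q
        have h1 : ((p + q).1 : V → ℝ) u = (p.1 : V → ℝ) u + (q.1 : V → ℝ) u := rfl
        have h2 : ∀ d : {x : W // x ≠ v},
            ((p + q).2 : {x : W // x ≠ v} → ℝ) d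
              = (p.2 : {x : W // x ≠ v} → ℝ) d + (q.2 : {x : W // x ≠ v} → ℝ) d :=
          fun d => rfl
        show ((p + q).1 : V → ℝ) u + ∑ d : {x : W // x ≠ v},
            adjMat H v d.val * ((p + q).2 : {x : W // x ≠ v} → ℝ) d = _
        rw [h1]
        have h3 : ∑ d : {x : W // x ≠ v},
            adjMat H v d.val * ((p + q).2 : {x : W // x ≠ v} → ℝ) d
            = (∑ d : {x : W // x ≠ v}, adjMat H v d.val * (p.2 : {x : W // x ≠ v} → ℝ) d)
            + ∑ d : {x : W // x ≠ v}, adjMat H v d.val * (q.2 : {x : W // x ≠ v} → ℝ) d := by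
          rw [← Finset.sum_add_distrib]
          exact Finset.sum_congr rfl fun d _ => by rw [h2 d]; ring
        rw [h3]; ring
      map_smul' := by
        intro c p
        have h1 : ((c • p).1 : V → ℝ) u = c * (p.1 : V → ℝ) u := rfl
        have h2 : ∀ d : {x : W // x ≠ v},
            ((c • p).2 : {x : W // x ≠ v} → ℝ) d = c * (p.2 : {x : W // x ≠ v} → ℝ) d :=
          fun d => rfl
        show ((c • p).1 : V → ℝ) u + ∑ d : {x : W // x ≠ v},
            adjMat H v d.val * ((c • p).2 : {x : W // x ≠ v} → ℝ) d = _
        rw [h1]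
        have h3 : ∑ d : {x : W // x ≠ v},
            adjMat H v d.val * ((c • p).2 : {x : W // x ≠ v} → ℝ) d
            = c * ∑ d : {x : W // x ≠ v}, adjMat H v d.val * (p.2 : {x : W // x ≠ v} → ℝ) d := by
          rw [Finset.mul_sum]
          exact Finset.sum_congr rfl fun d _ => by rw [h2 d]; ring
        rw [h3]
        show c * (p.1 : V → ℝ) u + _ = c * _
        ring }
  -- the comparison map Φ
  let Φ : EM →ₗ[ℝ] (EG × EH) :=
    { toFun := fun ξ => (⟨fun a => ξ.1 (Sum.inl a), hyE ξ.1 ξ.2⟩,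
                         ⟨fun d => ξ.1 (Sum.inr d.val), hwE ξ.1 ξ.2⟩)
      map_add' := fun ξ η => rfl
      map_smul' := fun c ξ => rfl }
  have hΦinj : Function.Injective Φ := by
    intro ξ η hfe
    have h1 : ∀ a, ξ.1 (Sum.inl a) = η.1 (Sum.inl a) := fun a =>
      congrFun (congrArg (fun p : EG × EH => (p.1 : V → ℝ)) hfe) a
    have h2 : ∀ d : {x : W // x ≠ v}, ξ.1 (Sum.inr d.val) = η.1 (Sum.inr d.val) := fun d =>
      congrFun (congrArg (fun p : EG × EH => (p.2 : {x : W // x ≠ v} → ℝ)) hfe) d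
    apply Subtype.ext; funext s
    cases s with
    | inl a => exact h1 a
    | inr c =>
      by_cases hcv : c = v
      · subst hcv; rw [hzv ξ.1 ξ.2, hzv η.1 η.2]
      · exact h2 ⟨c, hcv⟩
  have hrange : LinearMap.range Φ = LinearMap.ker L := by
    apply le_antisymm
    · rintro p ⟨ξ, rfl⟩
      rw [LinearMap.mem_ker]
      exact hconstraint ξ.1 ξ.2
    · intro p hp
      rw [LinearMap.mem_ker] at hp
      have hp' : p.1.1 u + ∑ d : {x : W // x ≠ v}, adjMat H v d.val * p.2.1 d = 0 := hp
      set y : V → ℝ := p.1.1 with hy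
      set w : {x : W // x ≠ v} → ℝ := p.2.1 with hw
      let ξ : (V ⊕ W) → ℝ := Sum.elim y (fun c => if hc : c = v then 0 else w ⟨c, hc⟩)
      have hξy : ∀ a, ξ (Sum.inl a) = y a := fun a => rfl
      have hξv : ξ (Sum.inr v) = 0 := dif_pos rfl
      have hξw : ∀ d : {x : W // x ≠ v}, ξ (Sum.inr d.val) = w d := fun d => dif_neg d.2
      have hξE : ξ ∈ EM := by
        rw [hEMdef, mem_eig_guvh_iff]
        constructor
        · intro a
          have hya := (mem_eig_iff G μ y).mp p.1.2 a
          rw [hξv]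
          simp only [hξy, ite_self, add_zero]
          exact hya
        · intro c
          by_cases hcv : c = v
          · rw [hcv, if_pos rfl, hξv, mul_zero]
            have hsplit := sum_split' v (fun d => adjMat H v d * ξ (Sum.inr d))
            simp only [hξv, mul_zero, add_zero] at hsplit
            rw [hsplit]
            have hww : ∑ d : {x : W // x ≠ v}, adjMat H v d.val * ξ (Sum.inr d.val)
                = ∑ d : {x : W // x ≠ v}, adjMat H v d.val * w d :=
              Finset.sum_congr rfl fun d _ => by rw [hξw d]
            rw [hww, hξy]
            linarith
          · rw [if_neg hcv, add_zero]
            have hmem := (mem_eig_iff (delV H v) μ w).mp p.2.2 ⟨c, hcv⟩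
            have hsplit := sum_split' v (fun d => adjMat H c d * ξ (Sum.inr d))
            simp only [hξv, mul_zero, add_zero] at hsplit
            rw [hsplit]
            calc ∑ d : {x : W // x ≠ v}, adjMat H c d.val * ξ (Sum.inr d.val)
                = ∑ d : {x : W // x ≠ v}, adjMat (delV H v) ⟨c, hcv⟩ d * w d :=
                  Finset.sum_congr rfl fun d _ => by rw [adjMat_delV, hξw d]
              _ = μ * w ⟨c, hcv⟩ := hmem
              _ = μ * ξ (Sum.inr c) := by rw [hξw ⟨c, hcv⟩]
      exact ⟨⟨ξ, hξE⟩, Prod.ext (Subtype.ext (funext fun a => rfl))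
        (Subtype.ext (funext fun d => hξw d))⟩
  have e1 : Module.finrank ℝ EM = Module.finrank ℝ (LinearMap.ker L) := by
    rw [← hrange]
    exact LinearEquiv.finrank_eq (LinearEquiv.ofInjective Φ hΦinj)
  have hLsurj : LinearMap.range L = ⊤ := by
    rw [LinearMap.range_eq_top]
    intro c
    refine ⟨(c / φ u) • (⟨⟨φ, hφE⟩, 0⟩ : EG × EH), ?_⟩
    have hL0 : L (⟨⟨φ, hφE⟩, 0⟩ : EG × EH) = φ u := by
      show φ u + ∑ d : {x : W // x ≠ v},
        adjMat H v d.val * ((0 : EH) : {x : W // x ≠ v} → ℝ) d = φ u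
      simp
    rw [map_smul, hL0, smul_eq_mul, div_mul_cancel₀ _ hφu]
  have e2 := LinearMap.finrank_range_add_finrank_ker L
  rw [hLsurj, finrank_top, finrank_self] at e2
  have e3 : Module.finrank ℝ (EG × EH) = Module.finrank ℝ EG + Module.finrank ℝ EH :=
    finrank_prod
  have goal' : Module.finrank ℝ EM + 1 = Module.finrank ℝ EH + Module.finrank ℝ EG := by
    omega
  exact goal'
end

section
/- Let T be a tree of diameter at most 3 and let λ be a nonzero eigenvalue of the adjacency matrix of T. Then for every vertex v of T, λ is not an eigenvalue of the adjacency matrix of T − v. -/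
open Module

attribute [local instance] Classical.propDecidable

/-!
A tree of diameter at most 3 with an edge is a double star: two vertices of degree at least 2
must be adjacent (otherwise a shortest path between them extends at both ends to a path of
length at least 4), so by triangle-freeness there are at most two of them, and they span an edge
`c₁c₂` meeting every edge.

Let `x` be an eigenvector for `μ ≠ 0` of a double star whose centres have degrees `d₁, d₂`. The
leaf equations `μ x u = x cᵢ` turn the equations at the centres into
`μ² x c₁ = (d₁ - 1) x c₁ + μ x c₂` and its mirror image, and `x` cannot vanish at both centres, so
`(μ² - (d₁ - 1)) (μ² - (d₂ - 1)) = μ²`. Deleting a leaf at `c₁` lowers `d₁` by one; subtracting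
the two identities gives `μ² = d₂ - 1`, and then the first one gives `μ = 0`. Deleting `c₁` leaves
a star at `c₂`, all of whose nonzero eigenvalues satisfy `μ² = d₂ - 1`, with the same conclusion.
-/

open Finset SimpleGraph

namespace SimpleGraph

variable {V : Type*} {G : SimpleGraph V}

lemma IsAcyclic.length_eq_dist (hG : G.IsAcyclic) {u v : V} {p : G.Walk u v} (hp : p.IsPath) :
    p.length = G.dist u v := by
  obtain ⟨q, hq, hlen⟩ := p.reachable.exists_path_of_dist
  rw [← hlen, Subtype.mk.inj ((hG.subsingleton_path u v).elim ⟨p, hp⟩ ⟨q, hq⟩)]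

lemma IsAcyclic.isPath_cons (hG : G.IsAcyclic) {u v w : V} {p : G.Walk v w} (hp : p.IsPath)
    (h : G.Adj u v) (hu : u ≠ p.snd) : (Walk.cons h p).IsPath :=
  Walk.cons_isPath_iff h p |>.mpr ⟨hp, fun hmem => hu (hG.eq_snd_of_adj_start hp h.symm hmem)⟩

lemma IsAcyclic.dist_eq_dist_add_two (hG : G.IsAcyclic) {x y x' y' : V} (hxy : x ≠ y)
    {p : G.Walk x y} (hp : p.IsPath) (hx : G.Adj x' x) (hx' : x' ≠ p.snd)
    (hy : G.Adj y' y) (hy' : y' ≠ p.penultimate) :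
    G.dist y' x' = G.dist x y + 2 := by
  have hq : (Walk.cons hx p).reverse.IsPath := (hG.isPath_cons hp hx hx').reverse
  have hsnd : (Walk.cons hx p).reverse.snd = p.penultimate := by
    rw [Walk.snd_reverse, Walk.penultimate_cons_of_not_nil _ _ (Walk.not_nil_of_ne hxy)]
  rw [← hG.length_eq_dist (hG.isPath_cons hq hy (hsnd ▸ hy')), ← hG.length_eq_dist hp]
  simp

lemma IsAcyclic.not_adj_of_adj_of_adj (hG : G.IsAcyclic) {a b c : V} (hab : G.Adj a b)
    (hbc : G.Adj b c) : ¬ G.Adj a c := fun hac =>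
  hG.cliqueFree le_rfl {a, b, c} (is3Clique_triple_iff.mpr ⟨hab, hac, hbc⟩)

lemma Connected.dist_lt_of_forall_adj_eq (hG : G.Connected) {a b z : V}
    (hb : ∀ w, G.Adj b w → w = a) (hz : b ≠ z) : G.dist a z < G.dist b z := by
  obtain ⟨p, -, hlen⟩ := hG.exists_path_of_dist b z
  have hnil : ¬ p.Nil := Walk.not_nil_of_ne hz
  have hsnd : p.snd = a := hb _ (p.adj_snd hnil)
  calc G.dist a z = G.dist p.snd z := by rw [hsnd]
    _ ≤ p.tail.length := dist_le _
    _ < p.length := by rw [← p.length_tail_add_one hnil]; omega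
    _ = G.dist b z := hlen

lemma Connected.eq_or_eq_of_forall_adj_eq (hG : G.Connected) {a b : V}
    (ha : ∀ w, G.Adj a w → w = b) (hb : ∀ w, G.Adj b w → w = a) (z : V) : z = a ∨ z = b := by
  by_contra! h
  have := hG.dist_lt_of_forall_adj_eq ha h.1.symm
  have := hG.dist_lt_of_forall_adj_eq hb h.2.symm
  omega

lemma exists_adj_ne_of_one_lt_degree {x : V} [Fintype (G.neighborSet x)] (h : 1 < G.degree x)
    (z : V) : ∃ w, G.Adj x w ∧ w ≠ z := by
  rw [← card_neighborFinset_eq_degree, one_lt_card_iff_nontrivial] at h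
  obtain ⟨w, hw, hne⟩ := h.exists_ne z
  exact ⟨w, (mem_neighborFinset _ _ _).mp hw, hne⟩

lemma eq_of_adj_of_degree_le_one {x y w : V} [Fintype (G.neighborSet x)] (h : G.degree x ≤ 1)
    (hy : G.Adj x y) (hw : G.Adj x w) : w = y := by
  rw [← card_neighborFinset_eq_degree] at h
  exact card_le_one.mp h _ (by simpa) _ (by simpa)

@[simp]
lemma delV_adj {v : V} {a b : {u : V // u ≠ v}} : (delV G v).Adj a b ↔ G.Adj a b := Iff.rfl

/-- Up to isolated vertices, `G` is the double star with central edge `c₁c₂`. -/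
structure IsDoubleStar (G : SimpleGraph V) (c₁ c₂ : V) : Prop where
  adj : G.Adj c₁ c₂
  cover : ∀ ⦃a b⦄, G.Adj a b → a = c₁ ∨ a = c₂ ∨ b = c₁ ∨ b = c₂
  not_adj_of_adj : ∀ ⦃u⦄, G.Adj u c₁ → ¬ G.Adj u c₂

namespace IsDoubleStar

variable {c₁ c₂ : V}

lemma symm (hS : G.IsDoubleStar c₁ c₂) : G.IsDoubleStar c₂ c₁ where
  adj := hS.adj.symm
  cover _ _ h := by rcases hS.cover h with h | h | h | h <;> simp [h]
  not_adj_of_adj _ h₂ h₁ := hS.not_adj_of_adj h₁ h₂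

lemma adj_iff_of_adj {u : V} (hS : G.IsDoubleStar c₁ c₂) (hu : G.Adj u c₁) (hu₂ : u ≠ c₂)
    (w : V) : G.Adj u w ↔ w = c₁ := by
  refine ⟨fun huw => ?_, fun h => h ▸ hu⟩
  rcases hS.cover huw with rfl | rfl | rfl | rfl
  · exact absurd hu G.irrefl
  · exact absurd rfl hu₂
  · rfl
  · exact absurd huw (hS.not_adj_of_adj hu)

lemma delV_of_adj {v : V} (hS : G.IsDoubleStar c₁ c₂) (hv : G.Adj v c₁) (hv₂ : v ≠ c₂) :
    (delV G v).IsDoubleStar ⟨c₁, hv.ne'⟩ ⟨c₂, hv₂.symm⟩ where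
  adj := hS.adj
  cover a b h := by simpa [Subtype.ext_iff] using hS.cover (delV_adj.mp h)
  not_adj_of_adj u h₁ h₂ := hS.not_adj_of_adj (delV_adj.mp h₁) (delV_adj.mp h₂)

end IsDoubleStar

section Finite

variable [Fintype V]

lemma IsTree.adj_of_one_lt_degree (hG : G.IsTree) (hd : ∀ u v : V, G.dist u v ≤ 3) {x y : V}
    (hx : 1 < G.degree x) (hy : 1 < G.degree y) (hxy : x ≠ y) : G.Adj x y := by
  by_contra hnadj
  have h2 : 1 < G.dist x y := hG.connected.one_lt_dist_of_ne_of_not_adj hxy hnadj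
  obtain ⟨p, hp, -⟩ := hG.connected.exists_path_of_dist x y
  obtain ⟨x', hx', hne⟩ := exists_adj_ne_of_one_lt_degree hx p.snd
  obtain ⟨y', hy', hne'⟩ := exists_adj_ne_of_one_lt_degree hy p.penultimate
  have := hG.isAcyclic.dist_eq_dist_add_two hxy hp hx'.symm hne hy'.symm hne'
  have := hd y' x'
  omega

lemma IsTree.exists_adj_forall_one_lt_degree (hG : G.IsTree) (hd : ∀ u v : V, G.dist u v ≤ 3)
    {a b : V} (hab : G.Adj a b) :
    ∃ c₁ c₂, G.Adj c₁ c₂ ∧ ∀ x, 1 < G.degree x → x = c₁ ∨ x = c₂ := by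
  by_cases h₁ : ∃ c₁, 1 < G.degree c₁
  · obtain ⟨c₁, hc₁⟩ := h₁
    by_cases h₂ : ∃ c₂, c₂ ≠ c₁ ∧ 1 < G.degree c₂
    · obtain ⟨c₂, hne, hc₂⟩ := h₂
      have h₁₂ := hG.adj_of_one_lt_degree hd hc₁ hc₂ hne.symm
      refine ⟨c₁, c₂, h₁₂, fun x hx => ?_⟩
      by_contra! hx'
      exact hG.isAcyclic.not_adj_of_adj_of_adj (hG.adj_of_one_lt_degree hd hx hc₁ hx'.1) h₁₂
        (hG.adj_of_one_lt_degree hd hx hc₂ hx'.2)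
    · push Not at h₂
      obtain ⟨c₂, h₁₂, -⟩ := exists_adj_ne_of_one_lt_degree hc₁ c₁
      exact ⟨c₁, c₂, h₁₂, fun x hx => Or.inl (by_contra fun h => (h₂ x h).not_gt hx)⟩
  · push Not at h₁
    exact ⟨a, b, hab, fun x hx => absurd hx (h₁ x).not_gt⟩

lemma IsTree.exists_isDoubleStar (hG : G.IsTree) (hd : ∀ u v : V, G.dist u v ≤ 3)
    {a b : V} (hab : G.Adj a b) : ∃ c₁ c₂, G.IsDoubleStar c₁ c₂ := by
  obtain ⟨c₁, c₂, h₁₂, hbranch⟩ := hG.exists_adj_forall_one_lt_degree hd hab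
  refine ⟨c₁, c₂, h₁₂, fun x y hxy => ?_,
    fun u hu => hG.isAcyclic.not_adj_of_adj_of_adj hu h₁₂⟩
  by_contra! h
  have hx : G.degree x ≤ 1 := not_lt.mp fun hx => (hbranch x hx).elim h.1 h.2.1
  have hy : G.degree y ≤ 1 := not_lt.mp fun hy => (hbranch y hy).elim h.2.2.1 h.2.2.2
  rcases hG.connected.eq_or_eq_of_forall_adj_eq (fun w => eq_of_adj_of_degree_le_one hx hxy)
    (fun w => eq_of_adj_of_degree_le_one hy hxy.symm) c₁ with rfl | rfl
  · exact h.1 rfl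
  · exact h.2.2.1 rfl

lemma degree_delV {v c : V} (hc : c ≠ v) :
    (delV G v).degree ⟨c, hc⟩ = #((G.neighborFinset c).erase v) := by
  rw [← card_neighborFinset_eq_degree, ← Finset.card_map (Function.Embedding.subtype _)]
  congr 1
  ext w
  simp [and_comm]

lemma degree_delV_of_adj {v c : V} (h : G.Adj c v) :
    ((delV G v).degree ⟨c, h.ne⟩ : ℝ) = G.degree c - 1 := by
  rw [degree_delV, Finset.card_erase_of_mem (by simpa using h), card_neighborFinset_eq_degree,
    Nat.cast_pred h.degree_pos_left]

lemma degree_delV_of_not_adj {v c : V} (hc : c ≠ v) (h : ¬ G.Adj c v) :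
    (delV G v).degree ⟨c, hc⟩ = G.degree c := by
  rw [degree_delV, Finset.erase_eq_of_notMem (by simpa using h), card_neighborFinset_eq_degree]

lemma adjMat_eq_adjMatrix (G : SimpleGraph V) : adjMat G = G.adjMatrix ℝ := rfl

lemma _root_.HasEig.exists_eigenvector {μ : ℝ} (h : HasEig G μ) :
    ∃ x : V → ℝ, x ≠ 0 ∧ ∀ u, ∑ w ∈ G.neighborFinset u, x w = μ * x u := by
  obtain ⟨x, hx, hx0⟩ := h.exists_hasEigenvector
  refine ⟨x, hx0, fun u => ?_⟩
  have := congrFun (Module.End.mem_eigenspace_iff.mp hx) u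
  simpa [adjMat_eq_adjMatrix] using this

lemma eigenvector_eq_zero_of_forall_adj {μ : ℝ} {x : V → ℝ}
    (hx : ∀ u, ∑ w ∈ G.neighborFinset u, x w = μ * x u) (hμ : μ ≠ 0) {u : V}
    (hu : ∀ w, G.Adj u w → x w = 0) : x u = 0 := by
  have := hx u
  rw [Finset.sum_eq_zero fun w hw => hu w ((mem_neighborFinset _ _ _).mp hw)] at this
  exact (mul_eq_zero.mp this.symm).resolve_left hμ

lemma mul_sum_eigenvector_of_pendant {μ : ℝ} {x : V → ℝ}
    (hx : ∀ u, ∑ w ∈ G.neighborFinset u, x w = μ * x u) {c : V} {S : Finset V}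
    (hS : ∀ w ∈ S, ∀ y, G.Adj w y ↔ y = c) : μ * ∑ w ∈ S, x w = #S * x c := by
  rw [Finset.mul_sum, Finset.card_eq_sum_ones, Nat.cast_sum, Finset.sum_mul]
  refine Finset.sum_congr rfl fun w hw => ?_
  have hN : G.neighborFinset w = {c} := by ext y; simp [hS w hw y]
  simpa [hN] using (hx w).symm

lemma sq_eq_degree_of_hasEig {c : V} (hc : ∀ ⦃a b⦄, G.Adj a b → a = c ∨ b = c) {μ : ℝ}
    (hμ : μ ≠ 0) (h : HasEig G μ) : μ ^ 2 = G.degree c := by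
  obtain ⟨x, hx0, hx⟩ := h.exists_eigenvector
  have hleaf : ∀ w ∈ G.neighborFinset c, ∀ y, G.Adj w y ↔ y = c := by
    intro w hw y
    have hwc : G.Adj w c := ((mem_neighborFinset _ _ _).mp hw).symm
    exact ⟨fun hwy => (hc hwy).resolve_left hwc.ne, fun hy => hy ▸ hwc⟩
  have hxc : x c ≠ 0 := by
    refine fun hxc => hx0 (funext fun u => ?_)
    by_cases hu : u = c
    · exact hu ▸ hxc
    · exact eigenvector_eq_zero_of_forall_adj hx hμ fun w huw => (hc huw).resolve_left hu ▸ hxc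
  apply mul_right_cancel₀ hxc
  calc μ ^ 2 * x c = μ * ∑ w ∈ G.neighborFinset c, x w := by rw [hx]; ring
    _ = G.degree c * x c := by
      rw [mul_sum_eigenvector_of_pendant hx hleaf, card_neighborFinset_eq_degree]

namespace IsDoubleStar

variable {c₁ c₂ : V} {μ : ℝ}

lemma sq_mul_eigenvector {x : V → ℝ} (hS : G.IsDoubleStar c₁ c₂)
    (hx : ∀ u, ∑ w ∈ G.neighborFinset u, x w = μ * x u) :
    μ ^ 2 * x c₁ = (G.degree c₁ - 1) * x c₁ + μ * x c₂ := by
  have hc₂ : c₂ ∈ G.neighborFinset c₁ := by simpa using hS.adj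
  have hleaves : μ * ∑ w ∈ (G.neighborFinset c₁).erase c₂, x w = (G.degree c₁ - 1) * x c₁ := by
    rw [mul_sum_eigenvector_of_pendant hx fun w hw => hS.adj_iff_of_adj ?_ ?_,
      Finset.card_erase_of_mem hc₂, card_neighborFinset_eq_degree,
      Nat.cast_pred hS.adj.degree_pos_left]
    · exact ((mem_neighborFinset _ _ _).mp (Finset.mem_of_mem_erase hw)).symm
    · exact Finset.ne_of_mem_erase hw
  calc μ ^ 2 * x c₁ = μ * ∑ w ∈ G.neighborFinset c₁, x w := by rw [hx]; ring
    _ = μ * x c₂ + μ * ∑ w ∈ (G.neighborFinset c₁).erase c₂, x w := by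
      rw [← Finset.add_sum_erase _ _ hc₂, mul_add]
    _ = _ := by rw [hleaves]; ring

lemma eigenvalue_eq (hS : G.IsDoubleStar c₁ c₂) (hμ : μ ≠ 0) (h : HasEig G μ) :
    (μ ^ 2 - (G.degree c₁ - 1)) * (μ ^ 2 - (G.degree c₂ - 1)) = μ ^ 2 := by
  obtain ⟨x, hx0, hx⟩ := h.exists_eigenvector
  have r₁ := hS.sq_mul_eigenvector hx
  have r₂ := hS.symm.sq_mul_eigenvector hx
  have hc : x c₁ ≠ 0 ∨ x c₂ ≠ 0 := by
    by_contra! h0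
    refine hx0 (funext fun u => ?_)
    by_cases hu₁ : u = c₁
    · exact hu₁ ▸ h0.1
    by_cases hu₂ : u = c₂
    · exact hu₂ ▸ h0.2
    refine eigenvector_eq_zero_of_forall_adj hx hμ fun w huw => ?_
    rcases hS.cover huw with h | h | rfl | rfl
    exacts [absurd h hu₁, absurd h hu₂, h0.1, h0.2]
  rcases hc with hc | hc
  · apply mul_right_cancel₀ hc
    linear_combination (μ ^ 2 - (G.degree c₂ - 1)) * r₁ + μ * r₂
  · apply mul_right_cancel₀ hc
    linear_combination (μ ^ 2 - (G.degree c₁ - 1)) * r₂ + μ * r₁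

lemma not_hasEig_delV_left (hS : G.IsDoubleStar c₁ c₂) (hμ : μ ≠ 0) (h : HasEig G μ) :
    ¬ HasEig (delV G c₁) μ := by
  intro h'
  have hstar : ∀ ⦃a b : {u // u ≠ c₁}⦄, (delV G c₁).Adj a b →
      a = ⟨c₂, hS.adj.ne'⟩ ∨ b = ⟨c₂, hS.adj.ne'⟩ := by
    intro a b hab
    rcases hS.cover (delV_adj.mp hab) with h | h | h | h
    · exact absurd h a.2
    · exact Or.inl (Subtype.ext h)
    · exact absurd h b.2
    · exact Or.inr (Subtype.ext h)
  have e := hS.eigenvalue_eq hμ h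
  have e' := sq_eq_degree_of_hasEig hstar hμ h'
  rw [degree_delV_of_adj hS.adj.symm] at e'
  have : μ ^ 2 = 0 := by linear_combination -e + (μ ^ 2 - (G.degree c₁ - 1)) * e'
  exact pow_ne_zero 2 hμ this

lemma not_hasEig_delV_of_adj {v : V} (hS : G.IsDoubleStar c₁ c₂) (hμ : μ ≠ 0) (h : HasEig G μ)
    (hv : G.Adj v c₁) (hv₂ : v ≠ c₂) : ¬ HasEig (delV G v) μ := by
  intro h'
  have e := hS.eigenvalue_eq hμ h
  have e' := (hS.delV_of_adj hv hv₂).eigenvalue_eq hμ h'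
  have hv₂' : ¬ G.Adj c₂ v := fun h₂ => hS.not_adj_of_adj hv h₂.symm
  rw [degree_delV_of_adj hv.symm, degree_delV_of_not_adj _ hv₂'] at e'
  have : μ ^ 2 - (G.degree c₂ - 1) = 0 := by linear_combination e' - e
  have : μ ^ 2 = 0 := by rw [← e, this, mul_zero]
  exact pow_ne_zero 2 hμ this

lemma not_hasEig_delV {v w : V} (hS : G.IsDoubleStar c₁ c₂) (hμ : μ ≠ 0) (h : HasEig G μ)
    (hvw : G.Adj v w) : ¬ HasEig (delV G v) μ := by
  rcases hS.cover hvw with rfl | rfl | rfl | rfl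
  · exact hS.not_hasEig_delV_left hμ h
  · exact hS.symm.not_hasEig_delV_left hμ h
  · by_cases hv : v = c₂
    · exact hv ▸ hS.symm.not_hasEig_delV_left hμ h
    · exact hS.not_hasEig_delV_of_adj hμ h hvw hv
  · by_cases hv : v = c₁
    · exact hv ▸ hS.not_hasEig_delV_left hμ h
    · exact hS.symm.not_hasEig_delV_of_adj hμ h hvw hv

end IsDoubleStar

end Finite

end SimpleGraph

theorem stmt4 {V : Type*} [Fintype V] (T : SimpleGraph V) (hT : T.IsTree)
    (hd : ∀ u v : V, T.dist u v ≤ 3) (μ : ℝ) (hμ : μ ≠ 0) (h : HasEig T μ) :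
    ∀ v : V, ¬ HasEig (delV T v) μ := by
  intro v
  cases subsingleton_or_nontrivial V
  · have hcover : ∀ ⦃a b : V⦄, T.Adj a b → a = v ∨ b = v :=
      fun a _ _ => Or.inl (Subsingleton.elim a v)
    have := sq_eq_degree_of_hasEig hcover hμ h
    simp [hμ] at this
  obtain ⟨w, hvw⟩ := not_forall_not.mp (hT.connected.preconnected.not_isIsolated v)
  obtain ⟨c₁, c₂, hS⟩ := hT.exists_isDoubleStar hd hvw
  exact hS.not_hasEig_delV hμ h hvw
end

section
/- Every nonzero eigenvalue of the adjacency matrix of a caterpillar graph is simple (has multiplicity 1). -/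
open Module

attribute [local instance] Classical.propDecidable

def spine {V : Type*} (G : SimpleGraph V) : Set V :=
  {v | ∃ u w, u ≠ w ∧ G.Adj v u ∧ G.Adj v w}

def IsCaterpillar {V : Type*} (G : SimpleGraph V) : Prop :=
  G.IsTree ∧ ∃ n, Nonempty ((G.induce (spine G)) ≃g SimpleGraph.pathGraph n)
/-! On a caterpillar with `μ ≠ 0`, a `μ`-eigenvector `x` is determined by its value at one end
of the spine. At a leaf `w` with neighbour `a` the eigenvalue equation reads `x a = μ * x w`, so
`x` vanishes at a leaf iff it vanishes at its neighbour. Walking along the spine, if `x` vanishes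
at all spine vertices up to `v`, it vanishes at the leaves of `v`, and then the eigenvalue equation
at `v` forces it to vanish at the next spine vertex. Hence evaluation at that end is injective on
the eigenspace, which therefore has dimension at most one. -/

theorem Submodule.finrank_le_one_of_eval_eq_zero {K ι : Type*} [Field K]
    {E : Submodule K (ι → K)} (i : ι) (h : ∀ x ∈ E, x i = 0 → x = 0) :
    Module.finrank K E ≤ 1 := by
  have hinj : Function.Injective ((LinearMap.proj i : (ι → K) →ₗ[K] K) ∘ₗ E.subtype) := by
    rw [← LinearMap.ker_eq_bot, LinearMap.ker_eq_bot']
    exact fun x hx => Subtype.ext (h x x.2 hx)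
  simpa using LinearMap.finrank_le_finrank_of_injective hinj

theorem SimpleGraph.Connected.induction_on_adj {V : Type*} {G : SimpleGraph V} (hG : G.Connected)
    {p : V → Prop} (hadj : ∀ u v, G.Adj u v → p u → p v) {u : V} (hu : p u) (v : V) : p v := by
  obtain ⟨W⟩ := hG.preconnected u v
  induction W with
  | nil => exact hu
  | cons h _ ih => exact ih (hadj _ _ h hu)

theorem eq_of_adj_of_notMem_spine {V : Type*} {G : SimpleGraph V} {w a b : V}
    (hw : w ∉ spine G) (ha : G.Adj w a) (hb : G.Adj w b) : a = b := by
  by_contra hne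
  exact hw ⟨a, b, hne, ha, hb⟩

section Eigenvector

variable {V : Type*} [Fintype V] {G : SimpleGraph V} {μ : ℝ} {x : V → ℝ}

theorem sum_neighborFinset_of_mem_eigenspace
    (hx : x ∈ Module.End.eigenspace (adjMat G).mulVecLin μ) (v : V) :
    ∑ w ∈ G.neighborFinset v, x w = μ * x v := by
  have hv := congrFun (Module.End.mem_eigenspace_iff.mp hx) v
  simp only [Matrix.mulVecLin_apply, Matrix.mulVec, dotProduct, adjMat, Matrix.of_apply,
    Pi.smul_apply, smul_eq_mul, ite_mul, one_mul, zero_mul] at hv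
  rwa [SimpleGraph.neighborFinset_eq_filter, Finset.sum_filter]

theorem eq_mul_of_adj_of_notMem_spine (hx : x ∈ Module.End.eigenspace (adjMat G).mulVecLin μ)
    {w a : V} (hw : w ∉ spine G) (ha : G.Adj w a) : x a = μ * x w := by
  have hleaf : G.neighborFinset w = {a} := by
    refine Finset.eq_singleton_iff_unique_mem.mpr ⟨by simpa using ha, fun b hb => ?_⟩
    exact eq_of_adj_of_notMem_spine hw ((G.mem_neighborFinset w b).mp hb) ha
  simpa [hleaf] using sum_neighborFinset_of_mem_eigenspace hx w

theorem eq_zero_of_adj_of_notMem_spine (hμ : μ ≠ 0)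
    (hx : x ∈ Module.End.eigenspace (adjMat G).mulVecLin μ) {v w : V} (hvw : G.Adj v w)
    (hleaf : v ∉ spine G ∨ w ∉ spine G) (hv : x v = 0) : x w = 0 := by
  rcases hleaf with hleaf | hleaf
  · simp [eq_mul_of_adj_of_notMem_spine hx hleaf hvw, hv]
  · simpa [hv, hμ, eq_comm] using eq_mul_of_adj_of_notMem_spine hx hleaf hvw.symm

theorem eq_zero_of_adj_of_forall_adj_ne
    (hx : x ∈ Module.End.eigenspace (adjMat G).mulVecLin μ) {v u : V} (hvu : G.Adj v u)
    (hv : x v = 0) (hothers : ∀ w, G.Adj v w → w ≠ u → x w = 0) : x u = 0 := by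
  have hsum := sum_neighborFinset_of_mem_eigenspace hx v
  rwa [Finset.sum_eq_single_of_mem u ((G.mem_neighborFinset v u).mpr hvu)
    (fun w hw => hothers w ((G.mem_neighborFinset v w).mp hw)), hv, mul_zero] at hsum

theorem eq_zero_on_spine_of_eq_zero_at_start (hμ : μ ≠ 0)
    (hx : x ∈ Module.End.eigenspace (adjMat G).mulVecLin μ) {n : ℕ}
    (e : G.induce (spine G) ≃g SimpleGraph.pathGraph n) (hn : 0 < n)
    (hstart : x (e.symm ⟨0, hn⟩) = 0) (i : Fin n) : x (e.symm i) = 0 := by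
  have hadj : ∀ {v w : spine G}, G.Adj v w ↔ (e v : ℕ) + 1 = e w ∨ (e w : ℕ) + 1 = e v := by
    intro v w
    rw [← SimpleGraph.pathGraph_adj, e.map_adj_iff, SimpleGraph.comap_adj]
    rfl
  obtain ⟨k, hk⟩ := i
  induction k using Nat.strong_induction_on with
  | _ k ih =>
    obtain _ | j := k
    · exact hstart
    have hj : j < n := by omega
    refine eq_zero_of_adj_of_forall_adj_ne hx (hadj.mpr (by simp)) (ih j (by omega) hj)
      fun w hvw hw => ?_
    by_cases hws : w ∈ spine G
    · obtain ⟨⟨i, hi⟩, hwi⟩ := e.symm.surjective ⟨w, hws⟩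
      obtain rfl : (e.symm ⟨i, hi⟩ : V) = w := congrArg Subtype.val hwi
      have hpred : i + 1 = j := by
        have := hadj.mp hvw
        simp only [RelIso.apply_symm_apply] at this
        refine this.resolve_left fun hsucc => hw ?_
        simp [← hsucc]
      exact ih i (by omega) hi
    · exact eq_zero_of_adj_of_notMem_spine hμ hx hvw (.inr hws) (ih j (by omega) hj)

theorem eq_zero_of_eq_zero_on_spine (hG : G.Connected) (hμ : μ ≠ 0)
    (hx : x ∈ Module.End.eigenspace (adjMat G).mulVecLin μ) {v₀ : V} (hv₀ : x v₀ = 0)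
    (hspine : ∀ v ∈ spine G, x v = 0) : x = 0 := by
  refine funext (hG.induction_on_adj (p := fun v => x v = 0) (fun u v huv hu => ?_) hv₀)
  by_cases hboth : u ∈ spine G ∧ v ∈ spine G
  · exact hspine v hboth.2
  · exact eq_zero_of_adj_of_notMem_spine hμ hx huv (not_and_or.mp hboth) hu

theorem IsCaterpillar.exists_eq_zero_of_mem_eigenspace (hG : IsCaterpillar G) (hμ : μ ≠ 0) :
    ∃ v₀ : V, ∀ x ∈ Module.End.eigenspace (adjMat G).mulVecLin μ, x v₀ = 0 → x = 0 := by
  obtain ⟨htree, n, ⟨e⟩⟩ := hG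
  rcases Nat.eq_zero_or_pos n with rfl | hn
  · obtain ⟨v₀⟩ := htree.connected.nonempty
    refine ⟨v₀, fun x hx hv₀ => eq_zero_of_eq_zero_on_spine htree.connected hμ hx hv₀ ?_⟩
    exact fun v hv => (e ⟨v, hv⟩).elim0
  · refine ⟨e.symm ⟨0, hn⟩, fun x hx hv₀ => ?_⟩
    refine eq_zero_of_eq_zero_on_spine htree.connected hμ hx hv₀ fun v hv => ?_
    simpa using eq_zero_on_spine_of_eq_zero_at_start hμ hx e hn hv₀ (e ⟨v, hv⟩)

end Eigenvector

theorem stmt5 {V : Type*} [Fintype V] (G : SimpleGraph V) (hG : IsCaterpillar G)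
    (μ : ℝ) (hμ : μ ≠ 0) (h : HasEig G μ) : eigMult G μ = 1 := by
  obtain ⟨v₀, hv₀⟩ := hG.exists_eq_zero_of_mem_eigenspace hμ
  have hpos : 0 < eigMult G μ :=
    Submodule.one_le_finrank_iff.mpr (Module.End.hasEigenvalue_iff.mp h)
  have hle : eigMult G μ ≤ 1 := Submodule.finrank_le_one_of_eval_eq_zero v₀ hv₀
  omega
end

section
/- Let a ≥ 1 and let C_3(a,a,a) be the graph obtained from the triangle C_3 by attaching a pendant vertices to each of its three vertices. Then the eigenvalues −(√(1+4a)+1)/2 and (√(1+4a)−1)/2 of the adjacency matrix of C_3(a,a,a) each have multiplicity 2, and 1−√(1+a) and 1+√(1+a) are also eigenvalues, each with multiplicity 1. -/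
open Module

attribute [local instance] Classical.propDecidable

/-! For `μ ≠ 0` an eigenvector of `C₃(a,a,a)` is determined by its values `c` on the triangle:
the pendant vertices at `i` carry `cᵢ / μ`, and the triangle equations become
`μ · ∑ c = (μ² + μ - a) · cᵢ`. When `μ² + μ = a` these say `∑ c = 0` (a plane), and when
`μ² - 2μ = a` they say that `c` is constant (a line). The four eigenvalues of the statement are
the roots of these two quadratics. -/

namespace TriStar

open Matrix Module.End

variable {a : ℕ} {μ : ℝ}

lemma adj_inl_inl {i j : Fin 3} : (triStar a).Adj (.inl i) (.inl j) ↔ i ≠ j := by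
  simp [triStar, SimpleGraph.fromRel_adj]

lemma adj_inl_inr {i j : Fin 3} {k : Fin a} : (triStar a).Adj (.inl i) (.inr (j, k)) ↔ i = j := by
  simp [triStar, SimpleGraph.fromRel_adj, eq_comm]

lemma adj_inr_inl {i j : Fin 3} {k : Fin a} : (triStar a).Adj (.inr (j, k)) (.inl i) ↔ i = j := by
  rw [SimpleGraph.adj_comm, adj_inl_inr]

lemma not_adj_inr_inr {p q : Fin 3 × Fin a} : ¬ (triStar a).Adj (.inr p) (.inr q) := by
  simp [triStar, SimpleGraph.fromRel_adj]

lemma adjMat_mulVec_inl (x : Fin 3 ⊕ Fin 3 × Fin a → ℝ) (i : Fin 3) :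
    (adjMat (triStar a) *ᵥ x) (.inl i) =
      ∑ j, x (.inl j) - x (.inl i) + ∑ k, x (.inr (i, k)) := by
  simp only [Matrix.mulVec, dotProduct, Fintype.sum_sum_type, Fintype.sum_prod_type, adjMat,
    Matrix.of_apply, adj_inl_inl, adj_inl_inr, ite_mul, one_mul, zero_mul]
  fin_cases i <;> simp [Fin.sum_univ_three] <;> ring

lemma adjMat_mulVec_inr (x : Fin 3 ⊕ Fin 3 × Fin a → ℝ) (i : Fin 3) (k : Fin a) :
    (adjMat (triStar a) *ᵥ x) (.inr (i, k)) = x (.inl i) := by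
  simp [Matrix.mulVec, dotProduct, Fintype.sum_sum_type, adjMat, adj_inr_inl, not_adj_inr_inr]

lemma mem_eigenspace_iff {x : Fin 3 ⊕ Fin 3 × Fin a → ℝ} :
    x ∈ eigenspace (adjMat (triStar a)).mulVecLin μ ↔
      (∀ i, ∑ j, x (.inl j) - x (.inl i) + ∑ k, x (.inr (i, k)) = μ * x (.inl i)) ∧
      ∀ i k, x (.inl i) = μ * x (.inr (i, k)) := by
  simp only [Module.End.mem_eigenspace_iff, funext_iff, Sum.forall, Prod.forall,
    mulVecLin_apply, adjMat_mulVec_inl, adjMat_mulVec_inr, Pi.smul_apply, smul_eq_mul]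

lemma mem_eigenspace_iff_of_ne_zero (hμ : μ ≠ 0) {x : Fin 3 ⊕ Fin 3 × Fin a → ℝ} :
    x ∈ eigenspace (adjMat (triStar a)).mulVecLin μ ↔
      (∀ i, μ * ∑ j, x (.inl j) = (μ ^ 2 + μ - a) * x (.inl i)) ∧
      ∀ i k, x (.inr (i, k)) = x (.inl i) / μ := by
  have pendant_iff : (∀ i k, x (.inl i) = μ * x (.inr (i, k))) ↔
      ∀ i k, x (.inr (i, k)) = x (.inl i) / μ := by
    simp only [eq_div_iff hμ, mul_comm _ μ, eq_comm]
  rw [mem_eigenspace_iff, pendant_iff, and_congr_left_iff]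
  intro hx
  simp only [hx, Finset.sum_const, Finset.card_univ, Fintype.card_fin, nsmul_eq_mul]
  refine forall_congr' fun i => ?_
  rw [← mul_right_inj' hμ]
  constructor <;> intro h <;> field_simp at h ⊢ <;> linarith

variable (a μ) in
noncomputable def restrictToTriangle :
    eigenspace (adjMat (triStar a)).mulVecLin μ →ₗ[ℝ] (Fin 3 → ℝ) :=
  (LinearMap.funLeft ℝ ℝ Sum.inl).comp (Submodule.subtype _)

lemma restrictToTriangle_injective (hμ : μ ≠ 0) :
    Function.Injective (restrictToTriangle a μ) := by
  refine (injective_iff_map_eq_zero _).2 fun x hx => Subtype.ext (funext ?_)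
  have hinl (i : Fin 3) : (x : Fin 3 ⊕ Fin 3 × Fin a → ℝ) (.inl i) = 0 := congrFun hx i
  rintro (i | ⟨i, k⟩)
  · exact hinl i
  · rw [((mem_eigenspace_iff_of_ne_zero hμ).1 x.2).2, hinl, zero_div]; rfl

lemma mem_range_restrictToTriangle_iff (hμ : μ ≠ 0) {c : Fin 3 → ℝ} :
    c ∈ LinearMap.range (restrictToTriangle a μ) ↔
      ∀ i, μ * ∑ j, c j = (μ ^ 2 + μ - a) * c i := by
  constructor
  · rintro ⟨x, rfl⟩
    exact ((mem_eigenspace_iff_of_ne_zero hμ).1 x.2).1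
  · intro hc
    have hx : Sum.elim c (fun p => c p.1 / μ) ∈ eigenspace (adjMat (triStar a)).mulVecLin μ :=
      (mem_eigenspace_iff_of_ne_zero hμ).2 ⟨hc, fun _ _ => rfl⟩
    exact ⟨⟨_, hx⟩, rfl⟩

lemma eigMult_eq_finrank_range (hμ : μ ≠ 0) :
    eigMult (triStar a) μ = finrank ℝ (LinearMap.range (restrictToTriangle a μ)) :=
  (LinearMap.finrank_range_of_inj (restrictToTriangle_injective hμ)).symm

lemma eigMult_eq_two (hμ : μ ^ 2 + μ = a) (hμ0 : μ ≠ 0) : eigMult (triStar a) μ = 2 := by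
  let sum : Module.Dual ℝ (Fin 3 → ℝ) := LinearMap.lsum ℝ (fun _ => ℝ) ℝ fun _ => LinearMap.id
  have hrange : LinearMap.range (restrictToTriangle a μ) = LinearMap.ker sum := by
    ext c
    simp [mem_range_restrictToTriangle_iff hμ0, hμ, hμ0, sum]
  have hsum : sum ≠ 0 := fun h => by simpa [sum] using LinearMap.congr_fun h (Pi.single 0 1)
  have := Module.Dual.finrank_ker_add_one_of_ne_zero hsum
  rw [Module.finrank_fin_fun] at this
  rw [eigMult_eq_finrank_range hμ0, hrange]
  omega

lemma eigMult_eq_one (hμ : μ ^ 2 - 2 * μ = a) (hμ0 : μ ≠ 0) : eigMult (triStar a) μ = 1 := by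
  have hrange : LinearMap.range (restrictToTriangle a μ) = ℝ ∙ 1 := by
    ext c
    rw [mem_range_restrictToTriangle_iff hμ0, Submodule.mem_span_singleton]
    have h3 : μ ^ 2 + μ - a = μ * 3 := by rw [← hμ]; ring
    simp only [h3, mul_assoc, mul_right_inj' hμ0, Fin.sum_univ_three]
    constructor
    · intro h
      exact ⟨c 0, funext fun i => by fin_cases i <;> simp <;> linarith [h 0, h 1, h 2]⟩
    · rintro ⟨r, rfl⟩ i
      simp only [Pi.smul_apply, Pi.one_apply]
      ring
  rw [eigMult_eq_finrank_range hμ0, hrange, finrank_span_singleton one_ne_zero]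

end TriStar

theorem stmt8 (a : ℕ) (ha : 1 ≤ a) :
    eigMult (triStar a) (-((Real.sqrt (1 + 4 * (a : ℝ)) + 1) / 2)) = 2 ∧
    eigMult (triStar a) ((Real.sqrt (1 + 4 * (a : ℝ)) - 1) / 2) = 2 ∧
    eigMult (triStar a) (1 - Real.sqrt (1 + (a : ℝ))) = 1 ∧
    eigMult (triStar a) (1 + Real.sqrt (1 + (a : ℝ))) = 1 := by
  have ha' : (1 : ℝ) ≤ a := by exact_mod_cast ha
  set s := Real.sqrt (1 + 4 * (a : ℝ))
  set t := Real.sqrt (1 + (a : ℝ))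
  have hs : s ^ 2 = 1 + 4 * a := Real.sq_sqrt (by positivity)
  have ht : t ^ 2 = 1 + a := Real.sq_sqrt (by positivity)
  have hs0 : 0 ≤ s := Real.sqrt_nonneg _
  have ht0 : 0 ≤ t := Real.sqrt_nonneg _
  refine ⟨?_, ?_, ?_, ?_⟩
  · exact TriStar.eigMult_eq_two (by nlinarith) (by intro h; nlinarith)
  · exact TriStar.eigMult_eq_two (by nlinarith) (by intro h; nlinarith)
  · exact TriStar.eigMult_eq_one (by nlinarith) (by intro h; nlinarith)
  · exact TriStar.eigMult_eq_one (by nlinarith) (by intro h; nlinarith)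
end

section
/- Let G be isomorphic to C_3(a,a,a) or to C_5, and let λ ≠ 0 be an eigenvalue of A(G) with m_λ(G) = 2. Then for every vertex x of G, m_λ(G − x) = 1. -/
open Module

attribute [local instance] Classical.propDecidable

open scoped Matrix

/-!
Evaluation at `x` cuts the eigenspace of `G` down by at most one dimension, and eigenvectors
vanishing at `x` restrict to eigenvectors of `G − x`; hence `m_λ(G − x) ≥ m_λ(G) − 1 = 1`.
Conversely, `m_λ(G − x) ≤ 1` as soon as some vertex `y ≠ x` has the property that every solution
of the eigenvalue equations at the vertices other than `x`, vanishing at `x` and at `y`, is zero.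
Up to a rotation, `x` is the vertex `0` of `C_5`, or the triangle vertex `0` of `C_3(a,a,a)` or one
of its pendants, and `y` is a neighbour of `0`; the equations then propagate the zeros through the
graph. On `C_3(a,a,a)` the pendant equations give `λ ∑ f(pendants of i) = a f(i)`, which forces
`λ² + λ = a` when `m_λ = 2` (otherwise an eigenvector is determined by its value at one triangle
vertex); this relation is what closes the propagation when a pendant is deleted.
-/

lemma finrank_le_one_of_eq_zero_of_apply_eq_zero {V : Type*} {S : Submodule ℝ (V → ℝ)} (y : V)
    (h : ∀ f ∈ S, f y = 0 → f = 0) : finrank ℝ S ≤ 1 := by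
  have hinj : Function.Injective ((LinearMap.proj y : (V → ℝ) →ₗ[ℝ] ℝ).domRestrict S) := by
    rw [← LinearMap.ker_eq_bot, LinearMap.ker_eq_bot']
    exact fun f hf => Subtype.ext (h f f.2 hf)
  simpa using LinearMap.finrank_le_finrank_of_injective hinj

lemma mul_sum_eq_card_mul {ι : Type*} [Fintype ι] {μ c : ℝ} {g : ι → ℝ}
    (h : ∀ k, μ * g k = c) : μ * ∑ k, g k = Fintype.card ι * c := by
  simp [Finset.mul_sum, h]

lemma mul_sum_eq_card_sub_one_mul {ι : Type*} [Fintype ι] [DecidableEq ι] {μ c : ℝ} {g : ι → ℝ}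
    {k₀ : ι} (h₀ : g k₀ = 0) (h : ∀ k ≠ k₀, μ * g k = c) :
    μ * ∑ k, g k = (Fintype.card ι - 1) * c := by
  rw [← Finset.add_sum_erase _ _ (Finset.mem_univ k₀), h₀, zero_add, Finset.mul_sum,
    Finset.sum_congr rfl fun k hk => h k (Finset.ne_of_mem_erase hk)]
  simp [Finset.card_erase_of_mem, Nat.cast_pred (Fintype.card_pos_iff.2 ⟨k₀⟩)]

def delVCongr {V W : Type*} {G : SimpleGraph V} {H : SimpleGraph W} (e : G ≃g H) (x : V) :
    delV G x ≃g delV H (e x) where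
  toEquiv := e.toEquiv.subtypeEquiv fun _ => e.injective.ne_iff.symm
  map_rel_iff' := e.map_adj_iff

section eigMult

variable {V W : Type*} [Fintype V] [Fintype W]

lemma adjMat_mulVec_apply (G : SimpleGraph V) (f : V → ℝ) (u : V) :
    (adjMat G *ᵥ f) u = ∑ v, if G.Adj u v then f v else 0 := by
  simp [adjMat, Matrix.mulVec, dotProduct, ite_mul]

lemma mem_eigenspace_adjMat_iff {G : SimpleGraph V} {μ : ℝ} {f : V → ℝ} :
    f ∈ Module.End.eigenspace (adjMat G).mulVecLin μ ↔ ∀ u, (adjMat G *ᵥ f) u = μ * f u := by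
  rw [Module.End.mem_eigenspace_iff, funext_iff]
  rfl

lemma adjMat_mulVec_comp_iso {G : SimpleGraph V} {H : SimpleGraph W} (e : G ≃g H) (f : W → ℝ)
    (u : V) : (adjMat G *ᵥ (f ∘ e)) u = (adjMat H *ᵥ f) (e u) := by
  rw [adjMat_mulVec_apply, adjMat_mulVec_apply]
  exact Fintype.sum_equiv e.toEquiv _ _ fun v => by
    simp only [RelIso.coe_fn_toEquiv, e.map_adj_iff, Function.comp_apply]

lemma eigMult_eq_of_iso {G : SimpleGraph V} {H : SimpleGraph W} (e : G ≃g H) (μ : ℝ) :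
    eigMult G μ = eigMult H μ := by
  let L : (V → ℝ) ≃ₗ[ℝ] (W → ℝ) := LinearEquiv.funCongrLeft ℝ ℝ e.symm.toEquiv
  have hmap : (Module.End.eigenspace (adjMat G).mulVecLin μ).map L.toLinearMap
      = Module.End.eigenspace (adjMat H).mulVecLin μ := by
    ext g
    rw [Submodule.mem_map_equiv, mem_eigenspace_adjMat_iff, mem_eigenspace_adjMat_iff]
    change (∀ u, (adjMat G *ᵥ (g ∘ e)) u = μ * g (e u)) ↔ _
    simp only [adjMat_mulVec_comp_iso]
    exact e.toEquiv.forall_congr fun _ => Iff.rfl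
  rw [eigMult, eigMult, ← hmap, LinearEquiv.finrank_map_eq]

lemma eigMult_le_one_of_eq_zero_of_apply_eq_zero (G : SimpleGraph V) (μ : ℝ) (y : V)
    (h : ∀ f : V → ℝ, (∀ u, (adjMat G *ᵥ f) u = μ * f u) → f y = 0 → f = 0) :
    eigMult G μ ≤ 1 :=
  finrank_le_one_of_eq_zero_of_apply_eq_zero y fun f hf => h f (mem_eigenspace_adjMat_iff.1 hf)

/- With `DecidableEq V` in scope, the `Fintype` instance on `{u // u ≠ x}` is the one that is
found for concrete vertex types, not the classical one. -/
variable [DecidableEq V]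

lemma adjMat_delV_mulVec_apply (G : SimpleGraph V) (x : V) (F : V → ℝ) (hF : F x = 0)
    (u : {u // u ≠ x}) : (adjMat (delV G x) *ᵥ fun v => F v) u = (adjMat G *ᵥ F) u := by
  rw [adjMat_mulVec_apply, adjMat_mulVec_apply, ← Fintype.sum_subtype_add_sum_subtype (· ≠ x),
    Fintype.sum_eq_zero (fun v : {v // ¬v ≠ x} => if G.Adj u v then F v else 0)
      fun v => by simp [not_not.1 v.2, hF], add_zero]
  rfl

lemma eigMult_delV_le_one_of_eq_zero_of_apply_eq_zero (G : SimpleGraph V) (μ : ℝ) {x y : V}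
    (hy : y ≠ x)
    (h : ∀ F : V → ℝ, F x = 0 → (∀ u ≠ x, (adjMat G *ᵥ F) u = μ * F u) → F y = 0 → F = 0) :
    eigMult (delV G x) μ ≤ 1 := by
  refine finrank_le_one_of_eq_zero_of_apply_eq_zero ⟨y, hy⟩ fun g hg hgy => ?_
  let F : V → ℝ := fun v => if hv : v = x then 0 else g ⟨v, hv⟩
  have hFg : (fun v : {u // u ≠ x} => F v) = g := funext fun v => dif_neg v.2
  have hFx : F x = 0 := dif_pos rfl
  have hF : F = 0 := by
    refine h F hFx (fun u hu => ?_) (by simpa [F, hy] using hgy)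
    rw [← adjMat_delV_mulVec_apply G x F hFx ⟨u, hu⟩, hFg, mem_eigenspace_adjMat_iff.1 hg]
    simp [F, hu]
  rw [← hFg, hF]
  rfl

lemma eigMult_le_eigMult_delV_add_one (G : SimpleGraph V) (μ : ℝ) (x : V) :
    eigMult G μ ≤ eigMult (delV G x) μ + 1 := by
  rw [eigMult, eigMult]
  set E := Module.End.eigenspace (adjMat G).mulVecLin μ
  let φ : E →ₗ[ℝ] ℝ := (LinearMap.proj x : (V → ℝ) →ₗ[ℝ] ℝ).domRestrict E
  let ρ : LinearMap.ker φ →ₗ[ℝ] Module.End.eigenspace (adjMat (delV G x)).mulVecLin μ :=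
    ((LinearMap.funLeft ℝ ℝ Subtype.val).comp
        (E.subtype.comp (LinearMap.ker φ).subtype)).codRestrict _ fun f => by
        have hx : f.1.1 x = 0 := LinearMap.mem_ker.1 f.2
        refine mem_eigenspace_adjMat_iff.2 fun u => ?_
        change (adjMat (delV G x) *ᵥ fun v => f.1.1 v) u = _
        rw [adjMat_delV_mulVec_apply G x _ hx u]
        exact mem_eigenspace_adjMat_iff.1 f.1.2 u
  have hρ : Function.Injective ρ := by
    intro f g hfg
    ext v
    by_cases hv : v = x
    · subst hv
      exact (LinearMap.mem_ker.1 f.2).trans (LinearMap.mem_ker.1 g.2).symm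
    · exact congrFun (congrArg Subtype.val hfg) ⟨v, hv⟩
  have hrange : finrank ℝ (LinearMap.range φ) ≤ 1 := by
    simpa using Submodule.finrank_le (LinearMap.range φ)
  have := LinearMap.finrank_range_add_finrank_ker φ
  have := LinearMap.finrank_le_finrank_of_injective hρ
  omega

lemma eigMult_delV_eq_one_of_le_one {G : SimpleGraph V} {μ : ℝ} {x : V}
    (hm : eigMult G μ = 2) (h : eigMult (delV G x) μ ≤ 1) : eigMult (delV G x) μ = 1 := by
  have := eigMult_le_eigMult_delV_add_one G μ x
  omega

end eigMult

section cycleGraph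

open SimpleGraph

def cycleGraphAddRight (n : ℕ) (k : Fin (n + 2)) : cycleGraph (n + 2) ≃g cycleGraph (n + 2) where
  toEquiv := Equiv.addRight k
  map_rel_iff' := by simp [cycleGraph_adj]

lemma cycleGraph_five_eigMult_delV_zero_le_one (μ : ℝ) :
    eigMult (delV (cycleGraph 5) 0) μ ≤ 1 := by
  refine eigMult_delV_le_one_of_eq_zero_of_apply_eq_zero _ μ (y := 1) (by simp)
    fun F h0 hF h1 => ?_
  have h2 : F 2 = 0 := by
    simpa [adjMat_mulVec_apply, Fin.sum_univ_five, cycleGraph_adj, h0, h1] using hF 1 (by simp)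
  have h3 : F 3 = 0 := by
    simpa [adjMat_mulVec_apply, Fin.sum_univ_five, cycleGraph_adj, h0, h1, h2] using hF 2 (by simp)
  have h4 : F 4 = 0 := by
    simpa [adjMat_mulVec_apply, Fin.sum_univ_five, cycleGraph_adj, h0, h2, h3] using hF 3 (by simp)
  funext u
  fin_cases u <;> assumption

lemma cycleGraph_five_eigMult_delV_le_one (μ : ℝ) (x : Fin 5) :
    eigMult (delV (cycleGraph 5) x) μ ≤ 1 := by
  have hx : cycleGraphAddRight 3 (-x) x = 0 := add_neg_cancel x
  rw [eigMult_eq_of_iso (delVCongr (cycleGraphAddRight 3 (-x)) x), hx]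
  exact cycleGraph_five_eigMult_delV_zero_le_one μ

end cycleGraph

section triStar

variable {a : ℕ}

@[simp] lemma triStar_adj_inl_inl {i j : Fin 3} : (triStar a).Adj (.inl i) (.inl j) ↔ i ≠ j := by
  simp [triStar, SimpleGraph.fromRel_adj]

@[simp] lemma triStar_adj_inl_inr {i : Fin 3} {p : Fin 3 × Fin a} :
    (triStar a).Adj (.inl i) (.inr p) ↔ p.1 = i := by
  obtain ⟨j, k⟩ := p
  simp [triStar, SimpleGraph.fromRel_adj, eq_comm]

@[simp] lemma triStar_adj_inr_inl {p : Fin 3 × Fin a} {i : Fin 3} :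
    (triStar a).Adj (.inr p) (.inl i) ↔ p.1 = i := by
  rw [SimpleGraph.adj_comm, triStar_adj_inl_inr]

@[simp] lemma triStar_adj_inr_inr {p q : Fin 3 × Fin a} : ¬(triStar a).Adj (.inr p) (.inr q) := by
  simp [triStar, SimpleGraph.fromRel_adj]

def triStarAddRight (a : ℕ) (k : Fin 3) : triStar a ≃g triStar a where
  toEquiv := Equiv.sumCongr (Equiv.addRight k) ((Equiv.addRight k).prodCongr (Equiv.refl _))
  map_rel_iff' := by
    rintro (i | p) (j | q) <;> simp

lemma triStar_mulVec_inl (F : Fin 3 ⊕ Fin 3 × Fin a → ℝ) (i : Fin 3) :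
    (adjMat (triStar a) *ᵥ F) (.inl i) =
      (∑ j, if i = j then 0 else F (.inl j)) + ∑ k, F (.inr (i, k)) := by
  rw [adjMat_mulVec_apply, Fintype.sum_sum_type, Fintype.sum_prod_type_right]
  simp [ite_not]

lemma triStar_mulVec_inr (F : Fin 3 ⊕ Fin 3 × Fin a → ℝ) (p : Fin 3 × Fin a) :
    (adjMat (triStar a) *ᵥ F) (.inr p) = F (.inl p.1) := by
  simp [adjMat_mulVec_apply]

lemma triStar_eq_zero {μ : ℝ} (hμ : μ ≠ 0) {F : Fin 3 ⊕ Fin 3 × Fin a → ℝ}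
    (hinr : ∀ p, μ * F (.inr p) = F (.inl p.1)) (hinl : ∀ i, F (.inl i) = 0) : F = 0 := by
  funext v
  rcases v with i | p
  · exact hinl i
  · simpa [hμ, hinl] using hinr p

lemma triStar_sq_add_self_eq_of_eigMult_eq_two {μ : ℝ} (hμ : μ ≠ 0)
    (hm : eigMult (triStar a) μ = 2) : μ ^ 2 + μ = a := by
  by_contra hq
  suffices eigMult (triStar a) μ ≤ 1 by omega
  refine eigMult_le_one_of_eq_zero_of_apply_eq_zero _ μ (.inl 0) fun F hF h0 => ?_
  have hinr (p : Fin 3 × Fin a) : μ * F (.inr p) = F (.inl p.1) := by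
    rw [← hF, triStar_mulVec_inr]
  have hP (i : Fin 3) : μ * ∑ k, F (.inr (i, k)) = a * F (.inl i) := by
    simpa using mul_sum_eq_card_mul fun k => hinr (i, k)
  have e0 : F (.inl 1) + F (.inl 2) + ∑ k, F (.inr (0, k)) = μ * F (.inl 0) := by
    simpa [triStar_mulVec_inl, Fin.sum_univ_three] using hF (.inl 0)
  have e1 : F (.inl 0) + F (.inl 2) + ∑ k, F (.inr (1, k)) = μ * F (.inl 1) := by
    simpa [triStar_mulVec_inl, Fin.sum_univ_three] using hF (.inl 1)
  have h12 : F (.inl 1) + F (.inl 2) = 0 := by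
    refine (mul_eq_zero.1 ?_).resolve_left hμ
    linear_combination μ * e0 - hP 0 + (μ ^ 2 - a) * h0
  have h1 : F (.inl 1) = 0 := by
    refine (mul_eq_zero.1 ?_).resolve_left (sub_ne_zero.2 hq)
    linear_combination -μ * e1 + hP 1 + μ * h12 + μ * h0
  have h2 : F (.inl 2) = 0 := by linear_combination h12 - h1
  refine triStar_eq_zero hμ hinr fun i => ?_
  fin_cases i <;> assumption

lemma triStar_eigMult_delV_inl_zero_le_one {μ : ℝ} (hμ : μ ≠ 0) :
    eigMult (delV (triStar a) (.inl 0)) μ ≤ 1 := by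
  refine eigMult_delV_le_one_of_eq_zero_of_apply_eq_zero _ μ (y := .inl 1) (by simp)
    fun F h0 hF h1 => ?_
  have hinr (p : Fin 3 × Fin a) : μ * F (.inr p) = F (.inl p.1) := by
    rw [← hF _ Sum.inr_ne_inl, triStar_mulVec_inr]
  have hP1 : μ * ∑ k, F (.inr (1, k)) = a * F (.inl 1) := by
    simpa using mul_sum_eq_card_mul fun k => hinr (1, k)
  have e1 : F (.inl 0) + F (.inl 2) + ∑ k, F (.inr (1, k)) = μ * F (.inl 1) := by
    simpa [triStar_mulVec_inl, Fin.sum_univ_three] using hF (.inl 1) (by simp)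
  have h2 : F (.inl 2) = 0 := by
    refine (mul_eq_zero.1 ?_).resolve_left hμ
    linear_combination μ * e1 - hP1 - μ * h0 + (μ ^ 2 - a) * h1
  refine triStar_eq_zero hμ hinr fun i => ?_
  fin_cases i <;> assumption

lemma triStar_eigMult_delV_inr_zero_le_one {μ : ℝ} (hμ : μ ≠ 0) (hq : μ ^ 2 + μ = a)
    (k₀ : Fin a) : eigMult (delV (triStar a) (.inr (0, k₀))) μ ≤ 1 := by
  refine eigMult_delV_le_one_of_eq_zero_of_apply_eq_zero _ μ (y := .inl 1) (by simp)
    fun F hk₀ hF h1 => ?_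
  have hinr (p : Fin 3 × Fin a) (hp : p ≠ (0, k₀)) : μ * F (.inr p) = F (.inl p.1) := by
    rw [← hF _ (by simpa using hp), triStar_mulVec_inr]
  have hP0 : μ * ∑ k, F (.inr (0, k)) = (a - 1) * F (.inl 0) := by
    simpa using
      mul_sum_eq_card_sub_one_mul (k₀ := k₀) hk₀ fun k hk => hinr (0, k) (by simpa using hk)
  have hP1 : μ * ∑ k, F (.inr (1, k)) = a * F (.inl 1) := by
    simpa using mul_sum_eq_card_mul fun k => hinr (1, k) (by simp)
  have e0 : F (.inl 1) + F (.inl 2) + ∑ k, F (.inr (0, k)) = μ * F (.inl 0) := by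
    simpa [triStar_mulVec_inl, Fin.sum_univ_three] using hF (.inl 0) (by simp)
  have e1 : F (.inl 0) + F (.inl 2) + ∑ k, F (.inr (1, k)) = μ * F (.inl 1) := by
    simpa [triStar_mulVec_inl, Fin.sum_univ_three] using hF (.inl 1) (by simp)
  have h02 : F (.inl 0) + F (.inl 2) = 0 := by
    refine (mul_eq_zero.1 ?_).resolve_left hμ
    linear_combination μ * e1 - hP1 + (μ ^ 2 - a) * h1
  have h0 : F (.inl 0) = 0 := by
    linear_combination -μ * e0 + hP0 - F (.inl 0) * hq + μ * h02 + μ * h1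
  have h2 : F (.inl 2) = 0 := by linear_combination h02 - h0
  refine triStar_eq_zero hμ (fun p => ?_) fun i => ?_
  · by_cases hp : p = (0, k₀)
    · simp [hp, hk₀, h0]
    · exact hinr p hp
  · fin_cases i <;> assumption

lemma triStar_eigMult_delV_le_one {μ : ℝ} (hμ : μ ≠ 0) (hq : μ ^ 2 + μ = a)
    (x : Fin 3 ⊕ Fin 3 × Fin a) : eigMult (delV (triStar a) x) μ ≤ 1 := by
  rcases x with i | ⟨i, k⟩
  · have hx : triStarAddRight a (-i) (.inl i) = .inl 0 := by simp [triStarAddRight]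
    rw [eigMult_eq_of_iso (delVCongr (triStarAddRight a (-i)) _), hx]
    exact triStar_eigMult_delV_inl_zero_le_one hμ
  · have hx : triStarAddRight a (-i) (.inr (i, k)) = .inr (0, k) := by simp [triStarAddRight]
    rw [eigMult_eq_of_iso (delVCongr (triStarAddRight a (-i)) _), hx]
    exact triStar_eigMult_delV_inr_zero_le_one hμ hq k

end triStar

theorem stmt11 {V : Type*} [Fintype V] (G : SimpleGraph V)
    (hG : (∃ a, Nonempty (G ≃g triStar a)) ∨ Nonempty (G ≃g SimpleGraph.cycleGraph 5))
    (μ : ℝ) (hμ : μ ≠ 0) (hm : eigMult G μ = 2) :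
    ∀ x : V, eigMult (delV G x) μ = 1 := by
  intro x
  rcases hG with ⟨a, ⟨e⟩⟩ | ⟨⟨e⟩⟩
  · rw [eigMult_eq_of_iso e] at hm
    rw [eigMult_eq_of_iso (delVCongr e x)]
    have hq := triStar_sq_add_self_eq_of_eigMult_eq_two hμ hm
    exact eigMult_delV_eq_one_of_le_one hm (triStar_eigMult_delV_le_one hμ hq (e x))
  · rw [eigMult_eq_of_iso e] at hm
    rw [eigMult_eq_of_iso (delVCongr e x)]
    exact eigMult_delV_eq_one_of_le_one hm (cycleGraph_five_eigMult_delV_le_one μ (e x))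
end
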